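/- arXiv:1807.08216 — 5 statements merged into one kernel-verified Lean document; each statement's English description precedes it below -/
import Mathlib

section
/- Under assumptions A1 (the noises N₁,...,Nₙ are independent and each symmetrically distributed about zero) and A2 (Rₙ is invertible), for every realization of the noises, the random signs and the random permutation, the SPS confidence region Θ̂ₙ is star convex with the least-squares estimate θ̂ₙ as a star center; that is, for all θ ∈ Θ̂ₙ and all β ∈ [0,1], β·θ + (1−β)·θ̂ₙ ∈ Θ̂ₙ. -/
open MeasureTheory ProbabilityTheory Matrix
open scoped ENNReal

noncomputable section

/-- Squared Euclidean norm of a vector in `ℝ^d`. -/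
def spsNormSq {d : ℕ} (v : Fin d → ℝ) : ℝ := ∑ j, v j ^ 2

/-- The strict total order `≻_π`. -/
def SuccPi {m : ℕ} (σ : Equiv.Perm (Fin m)) (z : Fin m → ℝ) (k j : Fin m) : Prop :=
  z j < z k ∨ (z k = z j ∧ σ j < σ k)

/-- The (sign-perturbed) sums `S_i(θ)`. -/
def spsS {d n m : ℕ} (φ : Fin n → Fin d → ℝ) (Rhalf : Matrix (Fin d) (Fin d) ℝ)
    (Y : Fin n → ℝ) (a : Fin m → Fin n → ℝ) (i : Fin m) (θ : Fin d → ℝ) : Fin d → ℝ :=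
  Rhalf⁻¹ *ᵥ ((n : ℝ)⁻¹ • ∑ t, (a i t * (Y t - φ t ⬝ᵥ θ)) • φ t)

/-- The rank `𝓡(θ)`. -/
def spsRank {d n m : ℕ} [NeZero m] (φ : Fin n → Fin d → ℝ)
    (Rhalf : Matrix (Fin d) (Fin d) ℝ) (Y : Fin n → ℝ) (a : Fin m → Fin n → ℝ)
    (σ : Equiv.Perm (Fin m)) (θ : Fin d → ℝ) : ℕ :=
  1 + Set.ncard {i : Fin m | i ≠ 0 ∧
      SuccPi σ (fun j => spsNormSq (spsS φ Rhalf Y a j θ)) 0 i}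

/-- The SPS confidence region `Θ̂ₙ`. -/
def spsRegion {d n m : ℕ} [NeZero m] (φ : Fin n → Fin d → ℝ)
    (Rhalf : Matrix (Fin d) (Fin d) ℝ) (Y : Fin n → ℝ) (a : Fin m → Fin n → ℝ)
    (σ : Equiv.Perm (Fin m)) (q : ℕ) : Set (Fin d → ℝ) :=
  {θ | spsRank φ Rhalf Y a σ θ ≤ m - q}

namespace SPSaux

lemma normSq_nonneg {d : ℕ} (v : Fin d → ℝ) : 0 ≤ spsNormSq v :=
  Finset.sum_nonneg fun _ _ => sq_nonneg _

lemma normSq_eq_dot {d : ℕ} (v : Fin d → ℝ) : spsNormSq v = v ⬝ᵥ v := by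
  simp [spsNormSq, dotProduct, sq]

/-- Euclidean norm. -/
def nn {d : ℕ} (v : Fin d → ℝ) : ℝ := ‖(WithLp.equiv 2 (Fin d → ℝ)).symm v‖

lemma nn_nonneg {d : ℕ} (v : Fin d → ℝ) : 0 ≤ nn v := norm_nonneg _

lemma nn_sq {d : ℕ} (v : Fin d → ℝ) : nn v ^ 2 = spsNormSq v := by
  rw [nn, EuclideanSpace.norm_eq, Real.sq_sqrt (by positivity)]
  simp [spsNormSq, sq_abs]

lemma nn_eq_sqrt {d : ℕ} (v : Fin d → ℝ) : nn v = Real.sqrt (spsNormSq v) := by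
  rw [← nn_sq, Real.sqrt_sq (nn_nonneg v)]

lemma nn_add_le {d : ℕ} (v w : Fin d → ℝ) : nn (v + w) ≤ nn v + nn w := by
  simpa [nn] using norm_add_le ((WithLp.equiv 2 (Fin d → ℝ)).symm v)
    ((WithLp.equiv 2 (Fin d → ℝ)).symm w)

lemma nn_smul {d : ℕ} (c : ℝ) (v : Fin d → ℝ) : nn (c • v) = |c| * nn v := by
  simp [nn, norm_smul]

lemma nn_neg {d : ℕ} (v : Fin d → ℝ) : nn (-v) = nn v := by
  simpa using nn_smul (-1) v

lemma nn_mono {d : ℕ} {v w : Fin d → ℝ} (h : spsNormSq v ≤ spsNormSq w) : nn v ≤ nn w := by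
  rw [nn_eq_sqrt, nn_eq_sqrt]; exact Real.sqrt_le_sqrt h

lemma vecMulVec_mulVec' {d : ℕ} (v w x : Fin d → ℝ) :
    vecMulVec v w *ᵥ x = (w ⬝ᵥ x) • v := by
  ext i
  simp [vecMulVec_apply, mulVec, dotProduct, Finset.mul_sum, mul_comm, mul_left_comm]

lemma sum_mulVec' {d n : ℕ} (M : Fin n → Matrix (Fin d) (Fin d) ℝ) (x : Fin d → ℝ) :
    (∑ t, M t) *ᵥ x = ∑ t, (M t *ᵥ x) := by
  ext i
  simp [mulVec, dotProduct, Matrix.sum_apply, Finset.sum_mul]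
  rw [Finset.sum_comm]

lemma smul_mulVec' {d : ℕ} (c : ℝ) (M : Matrix (Fin d) (Fin d) ℝ) (x : Fin d → ℝ) :
    (c • M) *ᵥ x = c • (M *ᵥ x) := by
  ext i; simp [mulVec, dotProduct, Finset.mul_sum, mul_assoc]

lemma sum_dotProduct' {d n : ℕ} (f : Fin n → Fin d → ℝ) (w : Fin d → ℝ) :
    (∑ t, f t) ⬝ᵥ w = ∑ t, (f t ⬝ᵥ w) := by
  simp only [dotProduct, Finset.sum_apply, Finset.sum_mul]
  exact Finset.sum_comm

lemma dotProduct_sum' {d n : ℕ} (w : Fin d → ℝ) (f : Fin n → Fin d → ℝ) :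
    w ⬝ᵥ (∑ t, f t) = ∑ t, (w ⬝ᵥ f t) := by
  rw [dotProduct_comm, sum_dotProduct']
  exact Finset.sum_congr rfl fun t _ => dotProduct_comm _ _

/-- `Rn *ᵥ w = n⁻¹ • ∑ (φ t ⬝ᵥ w) • φ t` -/
lemma Rn_mulVec {d n : ℕ} (φ : Fin n → Fin d → ℝ) (Rn : Matrix (Fin d) (Fin d) ℝ)
    (hRn : Rn = (n : ℝ)⁻¹ • ∑ t, vecMulVec (φ t) (φ t)) (w : Fin d → ℝ) :
    Rn *ᵥ w = (n : ℝ)⁻¹ • ∑ t, (φ t ⬝ᵥ w) • φ t := by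
  rw [hRn, smul_mulVec', sum_mulVec']
  congr 1
  exact Finset.sum_congr rfl fun t _ => vecMulVec_mulVec' _ _ _

/-- Quadratic form identity. -/
lemma quad_eq {d n : ℕ} (φ : Fin n → Fin d → ℝ) (Rn Rhalf : Matrix (Fin d) (Fin d) ℝ)
    (hRn : Rn = (n : ℝ)⁻¹ • ∑ t, vecMulVec (φ t) (φ t))
    (hsym : Rhalfᵀ = Rhalf) (hRn2 : Rhalf * Rhalf = Rn) (w : Fin d → ℝ) :
    (n : ℝ)⁻¹ * ∑ t, (φ t ⬝ᵥ w) ^ 2 = spsNormSq (Rhalf *ᵥ w) := by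
  have h1 : spsNormSq (Rhalf *ᵥ w) = w ⬝ᵥ (Rn *ᵥ w) := by
    rw [normSq_eq_dot, dotProduct_mulVec, ← mulVec_transpose, hsym, mulVec_mulVec, hRn2,
      dotProduct_comm]
  rw [h1, Rn_mulVec φ Rn hRn w]
  rw [dotProduct_smul, dotProduct_sum', smul_eq_mul]
  congr 1
  refine Finset.sum_congr rfl fun t _ => ?_
  rw [dotProduct_smul, smul_eq_mul, dotProduct_comm, sq]

/-- Key contraction bound. -/
lemma contraction {d n : ℕ} (φ : Fin n → Fin d → ℝ)
    (Rn Rhalf : Matrix (Fin d) (Fin d) ℝ)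
    (hRn : Rn = (n : ℝ)⁻¹ • ∑ t, vecMulVec (φ t) (φ t))
    (hdet : IsUnit Rhalf.det)
    (hsym : Rhalfᵀ = Rhalf) (hRn2 : Rhalf * Rhalf = Rn)
    (ε : Fin n → ℝ) (hε : ∀ t, ε t = 1 ∨ ε t = -1) (u : Fin d → ℝ) :
    spsNormSq (Rhalf⁻¹ *ᵥ ((n : ℝ)⁻¹ • ∑ t, (ε t * (φ t ⬝ᵥ u)) • φ t))
      ≤ spsNormSq (Rhalf *ᵥ u) := by
  set s : Fin d → ℝ := (n : ℝ)⁻¹ • ∑ t, (ε t * (φ t ⬝ᵥ u)) • φ t with hs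
  set y : Fin d → ℝ := Rhalf⁻¹ *ᵥ s with hy
  set z : Fin d → ℝ := Rhalf⁻¹ *ᵥ y with hz
  have hinvsym : (Rhalf⁻¹)ᵀ = Rhalf⁻¹ := by
    rw [transpose_nonsing_inv, hsym]
  have h1 : spsNormSq y = s ⬝ᵥ z := by
    rw [normSq_eq_dot]
    conv_lhs => rw [hy, dotProduct_mulVec]
    rw [← mulVec_transpose, hinvsym, ← hz, dotProduct_comm]
  have hsdot : ∀ w : Fin d → ℝ, s ⬝ᵥ w = (n : ℝ)⁻¹ * ∑ t, ε t * (φ t ⬝ᵥ u) * (φ t ⬝ᵥ w) := by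
    intro w
    rw [hs, smul_dotProduct, sum_dotProduct', smul_eq_mul]
    congr 1
    exact Finset.sum_congr rfl fun t _ => by rw [smul_dotProduct, smul_eq_mul]
  have hRz : Rhalf *ᵥ z = y := by
    rw [hz, mulVec_mulVec, mul_nonsing_inv _ hdet, one_mulVec]
  have hCS : (s ⬝ᵥ z) ^ 2 ≤ spsNormSq (Rhalf *ᵥ u) * spsNormSq y := by
    rw [hsdot z]
    have hcs := Finset.sum_mul_sq_le_sq_mul_sq Finset.univ
      (fun t => ε t * (φ t ⬝ᵥ u)) (fun t => φ t ⬝ᵥ z)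
    have heps : ∀ t, (ε t * (φ t ⬝ᵥ u)) ^ 2 = (φ t ⬝ᵥ u) ^ 2 := by
      intro t; rcases hε t with h | h <;> rw [h] <;> ring
    rw [mul_pow]
    calc ((n : ℝ)⁻¹) ^ 2 * (∑ t, ε t * (φ t ⬝ᵥ u) * (φ t ⬝ᵥ z)) ^ 2
        ≤ ((n : ℝ)⁻¹) ^ 2 * ((∑ t, (φ t ⬝ᵥ u) ^ 2) * ∑ t, (φ t ⬝ᵥ z) ^ 2) := by
          refine mul_le_mul_of_nonneg_left ?_ (by positivity)
          calc (∑ t, ε t * (φ t ⬝ᵥ u) * (φ t ⬝ᵥ z)) ^ 2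
              ≤ (∑ t, (ε t * (φ t ⬝ᵥ u)) ^ 2) * ∑ t, (φ t ⬝ᵥ z) ^ 2 := hcs
            _ = (∑ t, (φ t ⬝ᵥ u) ^ 2) * ∑ t, (φ t ⬝ᵥ z) ^ 2 := by
                congr 1; exact Finset.sum_congr rfl fun t _ => heps t
      _ = ((n : ℝ)⁻¹ * ∑ t, (φ t ⬝ᵥ u) ^ 2) * ((n : ℝ)⁻¹ * ∑ t, (φ t ⬝ᵥ z) ^ 2) := by ring
      _ = spsNormSq (Rhalf *ᵥ u) * spsNormSq y := by
          rw [quad_eq φ Rn Rhalf hRn hsym hRn2 u, quad_eq φ Rn Rhalf hRn hsym hRn2 z, hRz]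
  rw [← h1] at hCS
  nlinarith [normSq_nonneg y, normSq_nonneg (Rhalf *ᵥ u)]

/-- Formula for `S₀`. -/
lemma S0_eq {d n m : ℕ} [NeZero m] (hn : 0 < n) (φ : Fin n → Fin d → ℝ)
    (Rn Rhalf : Matrix (Fin d) (Fin d) ℝ)
    (hRn : Rn = (n : ℝ)⁻¹ • ∑ t, vecMulVec (φ t) (φ t))
    (hRnPD : Rn.PosDef) (hdet : IsUnit Rhalf.det) (hsym : Rhalfᵀ = Rhalf)
    (hRn2 : Rhalf * Rhalf = Rn)
    (Y : Fin n → ℝ) (a : Fin m → Fin n → ℝ) (ha0 : ∀ t, a 0 t = 1) (θhat : Fin d → ℝ)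
    (hθhat : θhat = (∑ t, vecMulVec (φ t) (φ t))⁻¹ *ᵥ ∑ t, Y t • φ t)
    (θ : Fin d → ℝ) :
    spsS φ Rhalf Y a 0 θ = Rhalf *ᵥ (θhat - θ) := by
  have hnne : (n : ℝ) ≠ 0 := Nat.cast_ne_zero.mpr hn.ne'
  have hA : (∑ t, vecMulVec (φ t) (φ t)) = (n : ℝ) • Rn := by
    rw [hRn, smul_smul, mul_inv_cancel₀ hnne, one_smul]
  have hdetA : IsUnit ((n : ℝ) • Rn).det := by
    rw [Matrix.det_smul]
    exact (mul_pos (pow_pos (by exact_mod_cast hn) _) hRnPD.det_pos).ne'.isUnit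
  have hNE : ((n : ℝ) • Rn) *ᵥ θhat = ∑ t, Y t • φ t := by
    rw [hθhat, hA, mulVec_mulVec, mul_nonsing_inv _ hdetA, one_mulVec]
  have h2 : ∑ t, (a 0 t * (Y t - φ t ⬝ᵥ θ)) • φ t
      = (∑ t, Y t • φ t) - ∑ t, (φ t ⬝ᵥ θ) • φ t := by
    rw [← Finset.sum_sub_distrib]
    exact Finset.sum_congr rfl fun t _ => by rw [ha0, one_mul, sub_smul]
  have hsum : ∑ t, (φ t ⬝ᵥ θ) • φ t = (n : ℝ) • (Rn *ᵥ θ) := by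
    rw [Rn_mulVec φ Rn hRn θ, smul_smul, mul_inv_cancel₀ hnne, one_smul]
  have h3 : (n : ℝ)⁻¹ • ∑ t, (a 0 t * (Y t - φ t ⬝ᵥ θ)) • φ t = Rn *ᵥ (θhat - θ) := by
    rw [h2, ← hNE, hsum, smul_mulVec', ← smul_sub, smul_smul, inv_mul_cancel₀ hnne, one_smul,
      ← mulVec_sub]
  rw [spsS, h3, ← hRn2, mulVec_mulVec, ← mul_assoc, nonsing_inv_mul _ hdet, one_mul]

/-- Affine decomposition of `S_i` along the segment. -/
lemma S_affine {d n m : ℕ} (φ : Fin n → Fin d → ℝ) (Rhalf : Matrix (Fin d) (Fin d) ℝ)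
    (Y : Fin n → ℝ) (a : Fin m → Fin n → ℝ) (i : Fin m) (θ θhat : Fin d → ℝ) (β : ℝ) :
    spsS φ Rhalf Y a i (β • θ + (1 - β) • θhat)
      = spsS φ Rhalf Y a i θ
        + Rhalf⁻¹ *ᵥ ((n : ℝ)⁻¹ • ∑ t, (a i t * (φ t ⬝ᵥ ((1 - β) • (θ - θhat)))) • φ t) := by
  have hterm : ∀ t : Fin n, (a i t * (Y t - φ t ⬝ᵥ (β • θ + (1 - β) • θhat))) • φ t
      = (a i t * (Y t - φ t ⬝ᵥ θ)) • φ t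
        + (a i t * (φ t ⬝ᵥ ((1 - β) • (θ - θhat)))) • φ t := by
    intro t
    rw [← add_smul]
    congr 1
    have h1 : φ t ⬝ᵥ (β • θ + (1 - β) • θhat)
        = β * (φ t ⬝ᵥ θ) + (1 - β) * (φ t ⬝ᵥ θhat) := by
      rw [dotProduct_add, dotProduct_smul, dotProduct_smul, smul_eq_mul, smul_eq_mul]
    have h2 : φ t ⬝ᵥ ((1 - β) • (θ - θhat)) = (1 - β) * (φ t ⬝ᵥ θ - φ t ⬝ᵥ θhat) := by
      rw [dotProduct_smul, smul_eq_mul, dotProduct_sub]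
    rw [h1, h2]; ring
  unfold spsS
  rw [Finset.sum_congr rfl (fun t _ => hterm t), Finset.sum_add_distrib, smul_add, mulVec_add]

end SPSaux

open SPSaux

/-- **Theorem 2 (Star convexity).** For every realization of the noises (hence of the
outputs `Y`), the random signs and the random permutation, the SPS confidence region is
star convex with the least-squares estimate `θ̂ₙ` as a star center. -/
theorem sps_star_convex
    (d n m q : ℕ) [NeZero m] (hn : 0 < n) (hq : 0 < q) (hqm : q < m)
    (φ : Fin n → Fin d → ℝ)
    (Rn : Matrix (Fin d) (Fin d) ℝ)
    (hRn : Rn = (n : ℝ)⁻¹ • ∑ t, vecMulVec (φ t) (φ t))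
    (hRnPD : Rn.PosDef)
    (Rhalf : Matrix (Fin d) (Fin d) ℝ)
    (hRhalfPD : Rhalf.PosDef)
    (hRhalf : Rhalf * Rhalfᵀ = Rn)
    -- a realization of the outputs
    (Y : Fin n → ℝ)
    -- a realization of the random signs, with `a 0 ≡ 1` the reference index
    (a : Fin m → Fin n → ℝ)
    (ha0 : ∀ t, a 0 t = 1)
    (ha : ∀ i t, a i t = 1 ∨ a i t = -1)
    -- a realization of the random permutation
    (π : Equiv.Perm (Fin m))
    -- the least-squares estimate
    (θhat : Fin d → ℝ)
    (hθhat : θhat = (∑ t, vecMulVec (φ t) (φ t))⁻¹ *ᵥ ∑ t, Y t • φ t) :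
    ∀ θ ∈ spsRegion φ Rhalf Y a π q, ∀ β : ℝ, β ∈ Set.Icc (0 : ℝ) 1 →
      β • θ + (1 - β) • θhat ∈ spsRegion φ Rhalf Y a π q := by
  intro θ hθ β hβ
  obtain ⟨hβ0, hβ1⟩ := hβ
  have hsym : Rhalfᵀ = Rhalf := by
    have h := hRhalfPD.isHermitian
    rwa [Matrix.IsHermitian, Matrix.conjTranspose_eq_transpose_of_trivial] at h
  have hRn2 : Rhalf * Rhalf = Rn := by rw [← hRhalf, hsym]
  have hdet : IsUnit Rhalf.det := hRhalfPD.det_pos.ne'.isUnit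
  set θβ := β • θ + (1 - β) • θhat with hθβdef
  have hS0θ : spsS φ Rhalf Y a 0 θ = Rhalf *ᵥ (θhat - θ) :=
    S0_eq hn φ Rn Rhalf hRn hRnPD hdet hsym hRn2 Y a ha0 θhat hθhat θ
  have hS0β : spsS φ Rhalf Y a 0 θβ = β • (Rhalf *ᵥ (θhat - θ)) := by
    have hvec : θhat - θβ = β • (θhat - θ) := by
      ext j
      simp only [hθβdef, Pi.sub_apply, Pi.add_apply, Pi.smul_apply, smul_eq_mul]
      ring
    rw [S0_eq hn φ Rn Rhalf hRn hRnPD hdet hsym hRn2 Y a ha0 θhat hθhat θβ, hvec, mulVec_smul]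
  set c := nn (Rhalf *ᵥ (θhat - θ)) with hc
  have hc0 : 0 ≤ c := nn_nonneg _
  have key : ∀ i : Fin m, i ≠ 0 →
      ¬ SuccPi π (fun j => spsNormSq (spsS φ Rhalf Y a j θ)) 0 i →
      ¬ SuccPi π (fun j => spsNormSq (spsS φ Rhalf Y a j θβ)) 0 i := by
    intro i hi0 hns
    simp only [SuccPi] at hns
    push_neg at hns
    obtain ⟨hle, hπ⟩ := hns
    set si := nn (spsS φ Rhalf Y a i θ) with hsi
    have hsi0 : 0 ≤ si := nn_nonneg _
    have hzθ0 : spsNormSq (spsS φ Rhalf Y a 0 θ) = c ^ 2 := by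
      rw [hS0θ, ← nn_sq, hc]
    have hzθi : spsNormSq (spsS φ Rhalf Y a i θ) = si ^ 2 := (nn_sq _).symm
    have hcsi : c ≤ si := by
      have h2 : c ^ 2 ≤ si ^ 2 := by rw [← hzθ0, ← hzθi]; exact hle
      nlinarith
    have hpert : nn (spsS φ Rhalf Y a i θβ - spsS φ Rhalf Y a i θ) ≤ (1 - β) * c := by
      have hcontr := contraction φ Rn Rhalf hRn hdet hsym hRn2 (a i) (ha i)
        ((1 - β) • (θ - θhat))
      have hdiff : spsS φ Rhalf Y a i θβ - spsS φ Rhalf Y a i θ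
          = Rhalf⁻¹ *ᵥ ((n : ℝ)⁻¹ •
              ∑ t, (a i t * (φ t ⬝ᵥ ((1 - β) • (θ - θhat)))) • φ t) := by
        rw [hθβdef, S_affine φ Rhalf Y a i θ θhat β]
        abel
      rw [hdiff]
      refine le_trans (nn_mono hcontr) ?_
      rw [mulVec_smul, nn_smul, abs_of_nonneg (by linarith)]
      have hneg : Rhalf *ᵥ (θ - θhat) = -(Rhalf *ᵥ (θhat - θ)) := by
        rw [← mulVec_neg, neg_sub]
      rw [hneg, nn_neg, ← hc]
    have htri : si - (1 - β) * c ≤ nn (spsS φ Rhalf Y a i θβ) := by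
      have h := nn_add_le (spsS φ Rhalf Y a i θβ)
        (spsS φ Rhalf Y a i θ - spsS φ Rhalf Y a i θβ)
      have hx : spsS φ Rhalf Y a i θβ + (spsS φ Rhalf Y a i θ - spsS φ Rhalf Y a i θβ)
          = spsS φ Rhalf Y a i θ := by abel
      rw [hx] at h
      have hneg2 : nn (spsS φ Rhalf Y a i θ - spsS φ Rhalf Y a i θβ)
          = nn (spsS φ Rhalf Y a i θβ - spsS φ Rhalf Y a i θ) := by
        rw [← nn_neg (spsS φ Rhalf Y a i θβ - spsS φ Rhalf Y a i θ), neg_sub]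
      rw [hneg2] at h
      rw [← hsi] at h
      linarith
    have hzβ0 : spsNormSq (spsS φ Rhalf Y a 0 θβ) = (β * c) ^ 2 := by
      rw [hS0β, ← nn_sq, nn_smul, abs_of_nonneg hβ0, ← hc]
    have hβc : β * c ≤ nn (spsS φ Rhalf Y a i θβ) := by nlinarith
    have hβc0 : 0 ≤ β * c := mul_nonneg hβ0 hc0
    intro hsucc
    simp only [SuccPi] at hsucc
    rcases hsucc with hlt | ⟨heq, hπlt⟩
    · have h1 : (β * c) ^ 2 ≤ spsNormSq (spsS φ Rhalf Y a i θβ) := by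
        rw [← nn_sq]; nlinarith [nn_nonneg (spsS φ Rhalf Y a i θβ)]
      rw [hzβ0] at hlt
      linarith
    · rcases lt_or_eq_of_le hcsi with hlt2 | heq2
      · have h1 : β * c < nn (spsS φ Rhalf Y a i θβ) := by nlinarith
        have h2 : (β * c) ^ 2 < spsNormSq (spsS φ Rhalf Y a i θβ) := by
          rw [← nn_sq]; nlinarith [nn_nonneg (spsS φ Rhalf Y a i θβ)]
        rw [hzβ0] at heq
        linarith [heq]
      · have hzz : spsNormSq (spsS φ Rhalf Y a 0 θ) = spsNormSq (spsS φ Rhalf Y a i θ) := by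
          rw [hzθ0, hzθi, heq2]
        exact absurd hπlt (not_lt.mpr (hπ hzz))
  have hsub : {i : Fin m | i ≠ 0 ∧ SuccPi π (fun j => spsNormSq (spsS φ Rhalf Y a j θβ)) 0 i}
      ⊆ {i : Fin m | i ≠ 0 ∧ SuccPi π (fun j => spsNormSq (spsS φ Rhalf Y a j θ)) 0 i} := by
    intro i hi
    obtain ⟨hi0, hsucc⟩ := hi
    refine ⟨hi0, ?_⟩
    by_contra hcon
    exact key i hi0 hcon hsucc
  have hcard := Set.ncard_le_ncard hsub (Set.toFinite _)
  simp only [spsRegion, spsRank, Set.mem_setOf_eq] at hθ ⊢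
  omega


end
end

section
/- Let φ₁, ..., φₙ ∈ ℝ^d be vectors such that Rₙ := (1/n)Σ_{t=1}^n φ_t φ_tᵀ is positive definite, let ε₁, ..., εₙ ∈ {−1, +1}, and let Q := (1/n)Σ_{t=1}^n ε_t φ_t φ_tᵀ. Then Rₙ ⪰ Q Rₙ⁻¹ Q in the Löwner partial ordering, i.e., the matrix Rₙ − Q Rₙ⁻¹ Q is positive semidefinite. -/
/-!
Both `Rₙ + Q = n⁻¹ Σ (1 + ε_t) φ_t φ_tᵀ` and `Rₙ - Q = n⁻¹ Σ (1 - ε_t) φ_t φ_tᵀ` have nonnegative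
weights, hence are positive semidefinite. For `M = Rₙ⁻¹ Q` one has
`(1 + Mᴴ)(Rₙ - Q) = (1 - Mᴴ)(Rₙ + Q) = Rₙ - Q Rₙ⁻¹ Q`, so
`2 (Rₙ - Q Rₙ⁻¹ Q) = (1 + M)ᴴ (Rₙ - Q) (1 + M) + (1 - M)ᴴ (Rₙ + Q) (1 - M)`,
a sum of congruences of positive semidefinite matrices.
-/

open Matrix
open scoped ComplexOrder

section
variable {ι n 𝕜 : Type*} [Fintype n] [RCLike 𝕜]

theorem posSemidef_sum_smul_vecMulVec_self_star (s : Finset ι) {c : ι → ℝ}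
    (hc : ∀ t ∈ s, 0 ≤ c t) (v : ι → n → 𝕜) :
    (∑ t ∈ s, c t • vecMulVec (v t) (star (v t))).PosSemidef :=
  posSemidef_sum s fun t ht => (posSemidef_vecMulVec_self_star (v t)).smul (hc t ht)

theorem posSemidef_sub_mul_inv_mul_of_add_of_sub [DecidableEq n] {R Q : Matrix n n 𝕜}
    (hR : R.IsHermitian) (hRunit : IsUnit R) (hadd : (R + Q).PosSemidef)
    (hsub : (R - Q).PosSemidef) :
    (R - Q * R⁻¹ * Q).PosSemidef := by
  have hQ : Q.IsHermitian := by simpa using hadd.isHermitian.sub hR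
  have hinv : R⁻¹ * R = 1 := nonsing_inv_mul R ((isUnit_iff_isUnit_det R).mp hRunit)
  set S := R - Q * R⁻¹ * Q
  have hM : (R⁻¹ * Q)ᴴ = Q * R⁻¹ := by
    rw [conjTranspose_mul, conjTranspose_nonsing_inv, hQ.eq, hR.eq]
  have hplus : (1 + Q * R⁻¹) * (R - Q) = S := by
    simp only [S, add_mul, mul_sub, one_mul, Matrix.mul_assoc, hinv, mul_one]; abel
  have hminus : (1 - Q * R⁻¹) * (R + Q) = S := by
    simp only [S, sub_mul, mul_add, one_mul, Matrix.mul_assoc, hinv, mul_one]; abel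
  have key : S = (2 : ℝ)⁻¹ • ((1 + R⁻¹ * Q)ᴴ * (R - Q) * (1 + R⁻¹ * Q)
      + (1 - R⁻¹ * Q)ᴴ * (R + Q) * (1 - R⁻¹ * Q)) := by
    rw [conjTranspose_add, conjTranspose_sub, conjTranspose_one, hM, hplus, hminus,
      ← mul_add, add_add_sub_cancel, ← two_smul ℝ, mul_smul_comm, mul_one, smul_smul]
    norm_num
  rw [key]
  exact ((hsub.conjTranspose_mul_mul_same _).add (hadd.conjTranspose_mul_mul_same _)).smul
    (by norm_num)

end

theorem lowner_ordering_general
    (d n : ℕ)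
    (φ : Fin n → Fin d → ℝ) (ε : Fin n → ℝ)
    (hε : ∀ t, ε t = 1 ∨ ε t = -1)
    (Rn Q : Matrix (Fin d) (Fin d) ℝ)
    (hRn : Rn = (n : ℝ)⁻¹ • ∑ t, vecMulVec (φ t) (φ t))
    (hQ : Q = (n : ℝ)⁻¹ • ∑ t, ε t • vecMulVec (φ t) (φ t))
    (hPD : Rn.PosDef) :
    (Rn - Q * Rn⁻¹ * Q).PosSemidef := by
  have hcombo (s : ℝ) :
      Rn + s • Q = (n : ℝ)⁻¹ • ∑ t, (1 + s * ε t) • vecMulVec (φ t) (star (φ t)) := by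
    rw [hRn, hQ, smul_comm s, ← smul_add, Finset.smul_sum, ← Finset.sum_add_distrib]
    simp only [smul_smul, add_smul, one_smul, star_trivial]
  have hpsd (s : ℝ) (hs : s = 1 ∨ s = -1) : (Rn + s • Q).PosSemidef := by
    rw [hcombo]
    refine (posSemidef_sum_smul_vecMulVec_self_star _ (fun t _ => ?_) φ).smul (by positivity)
    rcases hε t with h | h <;> rcases hs with rfl | rfl <;> norm_num [h]
  refine posSemidef_sub_mul_inv_mul_of_add_of_sub hPD.isHermitian hPD.isUnit ?_ ?_
  · simpa using hpsd 1 (.inl rfl)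
  · simpa [sub_eq_add_neg] using hpsd (-1) (.inr rfl)

/-- **Lemma 4 (Löwner ordering).** With `Rₙ = (1/n) Σ φ_t φ_tᵀ` positive definite and
`Q = (1/n) Σ ε_t φ_t φ_tᵀ` for signs `ε_t ∈ {−1, +1}`, we have `Rₙ ⪰ Q Rₙ⁻¹ Q`, i.e.,
`Rₙ − Q Rₙ⁻¹ Q` is positive semidefinite. -/
theorem lowner_ordering
    (d n : ℕ) (hn : 0 < n)
    (φ : Fin n → Fin d → ℝ) (ε : Fin n → ℝ)
    (hε : ∀ t, ε t = 1 ∨ ε t = -1)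
    (Rn Q : Matrix (Fin d) (Fin d) ℝ)
    (hRn : Rn = (n : ℝ)⁻¹ • ∑ t, vecMulVec (φ t) (φ t))
    (hQ : Q = (n : ℝ)⁻¹ • ∑ t, ε t • vecMulVec (φ t) (φ t))
    (hPD : Rn.PosDef) :
    (Rn - Q * Rn⁻¹ * Q).PosSemidef :=
  lowner_ordering_general d n φ ε hε Rn Q hRn hQ hPD
end

section
/- For each fixed realization of the sign sequence (ε₁,...,εₙ) ∈ {−1,+1}ⁿ, the set 𝓔 := {θ ∈ ℝ^d : ‖S₀(θ)‖² ≤ ‖S_ε(θ)‖²} is a convex subset of ℝ^d, and the least-squares estimate θ̂ₙ belongs to 𝓔. -/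
/-!
Write `Φ` for the design matrix with rows `φ_t` and `G = ΦᵀΦ = n Rₙ`. For fixed weights `a`, the
map `θ ↦ S_a(θ)` is affine with linear part `L_a z = -(Rₙ^{1/2})⁻¹ (1/n) Φᵀ (a ⊙ Φz)` (`S₀` is the
case `a = 1`), so `‖S₀‖² - ‖S_ε‖²` is a quadratic function with quadratic part
`‖L₁ z‖² - ‖L_ε z‖²`; it is convex, and so is its sublevel set `𝓔`, once `‖L_ε z‖ ≤ ‖L₁ z‖`.
Since `Rₙ^{1/2} (Rₙ^{1/2})ᵀ = G/n`, we have `‖(Rₙ^{1/2})⁻¹ Φᵀ u‖² = n ⟪u, P u⟫` for the orthogonal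
projection `P = Φ G⁻¹ Φᵀ` onto the range of `Φ`, and
`⟪ε ⊙ Φz, P (ε ⊙ Φz)⟫ ≤ ‖ε ⊙ Φz‖² = ‖Φz‖² = ⟪Φz, P Φz⟫` because `|ε_t| ≤ 1`.
Finally `θ̂ₙ` solves the normal equations `G θ = Φᵀ Y`, so `S₀(θ̂ₙ) = 0`.
-/

open Matrix

noncomputable section

/-- The vector `(Rₙ^{1/2})⁻¹ (1/n) Σ_t a_t φ_t (Y_t − φ_tᵀθ)`. -/
def spsVec {d n : ℕ} (φ : Fin n → Fin d → ℝ) (Rhalf : Matrix (Fin d) (Fin d) ℝ)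
    (Y : Fin n → ℝ) (a : Fin n → ℝ) (θ : Fin d → ℝ) : Fin d → ℝ :=
  Rhalf⁻¹ *ᵥ ((n : ℝ)⁻¹ • ∑ t, (a t * (Y t - φ t ⬝ᵥ θ)) • φ t)

section ConvexQuadratic

variable {E F : Type*} [AddCommGroup E] [Module ℝ E] [NormedAddCommGroup F] [InnerProductSpace ℝ F]

theorem norm_smul_add_smul_sq_of_add_eq_one {u v : F} {a b : ℝ} (hab : a + b = 1) :
    ‖a • u + b • v‖ ^ 2 = a * ‖u‖ ^ 2 + b * ‖v‖ ^ 2 - a * b * ‖u - v‖ ^ 2 := by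
  rw [norm_add_sq_real, norm_sub_sq_real, norm_smul, norm_smul, real_inner_smul_left,
    real_inner_smul_right, Real.norm_eq_abs, Real.norm_eq_abs, mul_pow, mul_pow, sq_abs, sq_abs]
  obtain rfl := eq_sub_of_add_eq hab
  ring

theorem convexOn_norm_sq_sub_norm_sq (f g : E →ᵃ[ℝ] F)
    (hfg : ∀ v, ‖g.linear v‖ ≤ ‖f.linear v‖) :
    ConvexOn ℝ Set.univ fun x => ‖f x‖ ^ 2 - ‖g x‖ ^ 2 := by
  refine ⟨convex_univ, fun x _ y _ a b ha hb hab => ?_⟩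
  have hgap : ‖g x - g y‖ ^ 2 ≤ ‖f x - f y‖ ^ 2 := by
    simpa only [← vsub_eq_sub, ← AffineMap.linearMap_vsub] using
      pow_le_pow_left₀ (norm_nonneg _) (hfg (x - y)) 2
  simp only [smul_eq_mul, Convex.combo_affine_apply hab, norm_smul_add_smul_sq_of_add_eq_one hab]
  nlinarith [mul_nonneg ha hb]

end ConvexQuadratic

section Projection

variable {m k : Type*} [Fintype m] [Fintype k] [DecidableEq k] (Φ : Matrix m k ℝ)

theorem dotProduct_transpose_mulVec_gram_inv_le (hΦ : IsUnit (Φᵀ * Φ).det) (u : m → ℝ) :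
    Φᵀ *ᵥ u ⬝ᵥ (Φᵀ * Φ)⁻¹ *ᵥ Φᵀ *ᵥ u ≤ u ⬝ᵥ u := by
  set v := (Φᵀ * Φ)⁻¹ *ᵥ Φᵀ *ᵥ u
  have hv : Φᵀ *ᵥ Φ *ᵥ v = Φᵀ *ᵥ u := by
    rw [mulVec_mulVec, mulVec_mulVec, mul_nonsing_inv _ hΦ, one_mulVec]
  have hcross : u ⬝ᵥ Φ *ᵥ v = Φᵀ *ᵥ u ⬝ᵥ v := by
    rw [dotProduct_mulVec, mulVec_transpose]
  have hsq : Φ *ᵥ v ⬝ᵥ Φ *ᵥ v = Φᵀ *ᵥ u ⬝ᵥ v := by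
    rw [dotProduct_mulVec, ← mulVec_transpose, hv]
  -- `v` is the least-squares coefficient of `u`, so the residual `u - Φ v` has squared norm
  -- `u ⬝ᵥ u - Φᵀ u ⬝ᵥ v`
  have hres : 0 ≤ (u - Φ *ᵥ v) ⬝ᵥ (u - Φ *ᵥ v) := Fintype.sum_nonneg fun _ => mul_self_nonneg _
  simp only [sub_dotProduct, dotProduct_sub, dotProduct_comm (Φ *ᵥ v) u, hcross, hsq] at hres
  linarith

theorem dotProduct_transpose_mulVec_gram_inv_mulVec (hΦ : IsUnit (Φᵀ * Φ).det) (z : k → ℝ) :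
    Φᵀ *ᵥ Φ *ᵥ z ⬝ᵥ (Φᵀ * Φ)⁻¹ *ᵥ Φᵀ *ᵥ Φ *ᵥ z = Φ *ᵥ z ⬝ᵥ Φ *ᵥ z := by
  have hz : (Φᵀ * Φ)⁻¹ *ᵥ Φᵀ *ᵥ Φ *ᵥ z = z := by
    rw [mulVec_mulVec, mulVec_mulVec, Matrix.mul_assoc, nonsing_inv_mul _ hΦ, one_mulVec]
  rw [hz, mulVec_transpose, ← dotProduct_mulVec]

theorem inv_mulVec_dotProduct_self (B : Matrix k k ℝ) (w : k → ℝ) :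
    B⁻¹ *ᵥ w ⬝ᵥ B⁻¹ *ᵥ w = w ⬝ᵥ (B * Bᵀ)⁻¹ *ᵥ w := by
  rw [dotProduct_mulVec, ← mulVec_transpose, dotProduct_comm, Matrix.mul_inv_rev,
    ← transpose_nonsing_inv, mulVec_mulVec]

theorem inv_mulVec_transpose_mulVec_weighted_le (B : Matrix k k ℝ) {c : ℝ} (hc : 0 < c)
    (hB : B * Bᵀ = c • (Φᵀ * Φ)) (hΦ : IsUnit (Φᵀ * Φ).det) {a : m → ℝ} (ha : ∀ i, |a i| ≤ 1)
    (z : k → ℝ) :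
    B⁻¹ *ᵥ Φᵀ *ᵥ (a * Φ *ᵥ z) ⬝ᵥ B⁻¹ *ᵥ Φᵀ *ᵥ (a * Φ *ᵥ z) ≤
      B⁻¹ *ᵥ Φᵀ *ᵥ Φ *ᵥ z ⬝ᵥ B⁻¹ *ᵥ Φᵀ *ᵥ Φ *ᵥ z := by
  have : Invertible c := invertibleOfNonzero hc.ne'
  simp only [inv_mulVec_dotProduct_self, hB, inv_smul _ _ hΦ, smul_mulVec, dotProduct_smul,
    smul_eq_mul, invOf_eq_inv]
  gcongr
  calc _ ≤ (a * Φ *ᵥ z) ⬝ᵥ (a * Φ *ᵥ z) := dotProduct_transpose_mulVec_gram_inv_le Φ hΦ _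
    _ ≤ Φ *ᵥ z ⬝ᵥ Φ *ᵥ z := by
      refine Finset.sum_le_sum fun i _ => ?_
      have ha2 : a i * a i ≤ 1 := by
        rw [← abs_mul_abs_self]
        exact mul_le_one₀ (ha i) (abs_nonneg _) (ha i)
      calc a i * (Φ *ᵥ z) i * (a i * (Φ *ᵥ z) i) = a i * a i * ((Φ *ᵥ z) i * (Φ *ᵥ z) i) := by
            ring
        _ ≤ _ := mul_le_of_le_one_left (mul_self_nonneg _) ha2
    _ = _ := (dotProduct_transpose_mulVec_gram_inv_mulVec Φ hΦ z).symm

end Projection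

theorem norm_toLp_sq {ι : Type*} [Fintype ι] (v : ι → ℝ) : ‖WithLp.toLp 2 v‖ ^ 2 = v ⬝ᵥ v := by
  rw [EuclideanSpace.real_norm_sq_eq]
  simp [dotProduct, sq]

theorem spsNormSq_eq_norm_sq {d : ℕ} (v : Fin d → ℝ) : spsNormSq v = ‖WithLp.toLp 2 v‖ ^ 2 := by
  simp [EuclideanSpace.real_norm_sq_eq, spsNormSq]

section SPS

variable {d n : ℕ} (φ : Fin n → Fin d → ℝ) (B : Matrix (Fin d) (Fin d) ℝ)

theorem sum_vecMulVec_eq_transpose_mul : ∑ t, vecMulVec (φ t) (φ t) = (of φ)ᵀ * of φ := by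
  ext i j
  simp [mul_apply, vecMulVec_apply, Matrix.sum_apply]

theorem sum_smul_eq_transpose_mulVec (c : Fin n → ℝ) : ∑ t, c t • φ t = (of φ)ᵀ *ᵥ c := by
  rw [mulVec_transpose, vecMul_eq_sum]
  rfl

theorem spsVec_eq (Y a : Fin n → ℝ) (θ : Fin d → ℝ) :
    spsVec φ B Y a θ = B⁻¹ *ᵥ ((n : ℝ)⁻¹ • (of φ)ᵀ *ᵥ (a * (Y - of φ *ᵥ θ))) := by
  rw [spsVec, ← sum_smul_eq_transpose_mulVec]
  rfl

theorem spsVec_add (Y Y' a : Fin n → ℝ) (θ θ' : Fin d → ℝ) :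
    spsVec φ B (Y + Y') a (θ + θ') = spsVec φ B Y a θ + spsVec φ B Y' a θ' := by
  simp only [spsVec_eq, mulVec_add, add_sub_add_comm, mul_add, smul_add]

theorem spsVec_smul (c : ℝ) (Y a : Fin n → ℝ) (θ : Fin d → ℝ) :
    spsVec φ B (c • Y) a (c • θ) = c • spsVec φ B Y a θ := by
  simp only [spsVec_eq, mulVec_smul, ← smul_sub, mul_smul_comm, smul_comm c]

def spsLinear (a : Fin n → ℝ) : (Fin d → ℝ) →ₗ[ℝ] EuclideanSpace ℝ (Fin d) where
  toFun z := WithLp.toLp 2 (spsVec φ B 0 a z)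
  map_add' x y := by rw [← WithLp.toLp_add, ← spsVec_add, add_zero]
  map_smul' c x := by rw [← WithLp.toLp_smul, ← spsVec_smul, smul_zero, RingHom.id_apply]

def spsAffine (Y a : Fin n → ℝ) : (Fin d → ℝ) →ᵃ[ℝ] EuclideanSpace ℝ (Fin d) where
  toFun θ := WithLp.toLp 2 (spsVec φ B Y a θ)
  linear := spsLinear φ B a
  map_vadd' θ z := by
    rw [vadd_eq_add, vadd_eq_add, spsLinear, LinearMap.coe_mk, AddHom.coe_mk, ← WithLp.toLp_add,
      ← spsVec_add, zero_add]

theorem norm_spsLinear_le (hn : 0 < n) (hB : B * Bᵀ = (n : ℝ)⁻¹ • ((of φ)ᵀ * of φ))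
    (hΦ : IsUnit ((of φ)ᵀ * of φ).det) {a : Fin n → ℝ} (ha : ∀ t, |a t| ≤ 1) (z : Fin d → ℝ) :
    ‖spsLinear φ B a z‖ ≤ ‖spsLinear φ B 1 z‖ := by
  have hlin : ∀ a, spsVec φ B 0 a z = -((n : ℝ)⁻¹ • (B⁻¹ *ᵥ (of φ)ᵀ *ᵥ (a * of φ *ᵥ z))) := by
    intro a
    rw [spsVec_eq, zero_sub, mul_neg, mulVec_neg, smul_neg, mulVec_neg, mulVec_smul]
  rw [← sq_le_sq₀ (norm_nonneg _) (norm_nonneg _)]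
  simp only [spsLinear, LinearMap.coe_mk, AddHom.coe_mk, norm_toLp_sq, hlin, one_mul,
    neg_dotProduct, dotProduct_neg, smul_dotProduct, dotProduct_smul, smul_eq_mul]
  gcongr
  exact inv_mulVec_transpose_mulVec_weighted_le (of φ) B (by positivity) hB hΦ ha z

theorem spsVec_one_leastSquares_eq_zero (hΦ : IsUnit ((of φ)ᵀ * of φ).det) (Y : Fin n → ℝ) :
    spsVec φ B Y 1 (((of φ)ᵀ * of φ)⁻¹ *ᵥ (of φ)ᵀ *ᵥ Y) = 0 := by
  rw [spsVec_eq, one_mul, mulVec_sub, mulVec_mulVec, mulVec_mulVec, mul_nonsing_inv _ hΦ,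
    one_mulVec, sub_self, smul_zero, mulVec_zero]

end SPS

theorem E_convex_contains_lse_general
    (d n : ℕ) (hn : 0 < n)
    (φ : Fin n → Fin d → ℝ) (Y : Fin n → ℝ)
    (ε : Fin n → ℝ) (hε : ∀ t, ε t = 1 ∨ ε t = -1)
    (Rn : Matrix (Fin d) (Fin d) ℝ)
    (hRn : Rn = (n : ℝ)⁻¹ • ∑ t, vecMulVec (φ t) (φ t))
    (hPD : Rn.PosDef)
    (Rhalf : Matrix (Fin d) (Fin d) ℝ)
    (hfact : Rhalf * Rhalfᵀ = Rn)
    (θhat : Fin d → ℝ)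
    (hθhat : θhat = (∑ t, vecMulVec (φ t) (φ t))⁻¹ *ᵥ ∑ t, Y t • φ t) :
    Convex ℝ {θ : Fin d → ℝ |
        spsNormSq (spsVec φ Rhalf Y (fun _ => 1) θ) ≤ spsNormSq (spsVec φ Rhalf Y ε θ)} ∧
    θhat ∈ {θ : Fin d → ℝ |
        spsNormSq (spsVec φ Rhalf Y (fun _ => 1) θ) ≤ spsNormSq (spsVec φ Rhalf Y ε θ)} := by
  rw [sum_vecMulVec_eq_transpose_mul] at hRn hθhat
  have hΦ : IsUnit ((of φ)ᵀ * of φ).det := by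
    have hdet := hPD.det_pos
    rw [hRn, det_smul] at hdet
    exact isUnit_iff_ne_zero.mpr (right_ne_zero_of_mul hdet.ne')
  have hsigns : ∀ t, |ε t| ≤ 1 := fun t => by rcases hε t with h | h <;> simp [h]
  have hset : {θ : Fin d → ℝ |
      spsNormSq (spsVec φ Rhalf Y (fun _ => 1) θ) ≤ spsNormSq (spsVec φ Rhalf Y ε θ)} =
      {θ ∈ Set.univ | ‖spsAffine φ Rhalf Y 1 θ‖ ^ 2 - ‖spsAffine φ Rhalf Y ε θ‖ ^ 2 ≤ 0} := by
    ext θ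
    simp only [Set.mem_univ, true_and, sub_nonpos, spsNormSq_eq_norm_sq]
    rfl
  refine ⟨hset ▸ (convexOn_norm_sq_sub_norm_sq _ _
    (norm_spsLinear_le φ Rhalf hn (hfact.trans hRn) hΦ hsigns)).convex_le 0, ?_⟩
  show spsNormSq (spsVec φ Rhalf Y 1 θhat) ≤ _
  rw [hθhat, sum_smul_eq_transpose_mulVec, spsVec_one_leastSquares_eq_zero φ Rhalf hΦ Y,
    spsNormSq_eq_norm_sq, spsNormSq_eq_norm_sq, WithLp.toLp_zero, norm_zero]
  exact pow_le_pow_left₀ le_rfl (norm_nonneg _) 2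

/-- For each fixed realization of the signs `ε ∈ {−1,+1}ⁿ`, the set
`𝓔 = {θ : ‖S₀(θ)‖² ≤ ‖S_ε(θ)‖²}` is convex and contains the least-squares estimate. -/
theorem E_convex_contains_lse
    (d n : ℕ) (hn : 0 < n)
    (φ : Fin n → Fin d → ℝ) (Y : Fin n → ℝ)
    (ε : Fin n → ℝ) (hε : ∀ t, ε t = 1 ∨ ε t = -1)
    (Rn : Matrix (Fin d) (Fin d) ℝ)
    (hRn : Rn = (n : ℝ)⁻¹ • ∑ t, vecMulVec (φ t) (φ t))
    (hPD : Rn.PosDef)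
    (Rhalf : Matrix (Fin d) (Fin d) ℝ)
    (hRhalfInv : IsUnit Rhalf.det)
    (hfact : Rhalf * Rhalfᵀ = Rn)
    (θhat : Fin d → ℝ)
    (hθhat : θhat = (∑ t, vecMulVec (φ t) (φ t))⁻¹ *ᵥ ∑ t, Y t • φ t) :
    Convex ℝ {θ : Fin d → ℝ |
        spsNormSq (spsVec φ Rhalf Y (fun _ => 1) θ) ≤ spsNormSq (spsVec φ Rhalf Y ε θ)} ∧
    θhat ∈ {θ : Fin d → ℝ |
        spsNormSq (spsVec φ Rhalf Y (fun _ => 1) θ) ≤ spsNormSq (spsVec φ Rhalf Y ε θ)} :=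
  E_convex_contains_lse_general d n hn φ Y ε hε Rn hRn hPD Rhalf hfact θhat hθhat

end
end

section
/- For each fixed realization of the sign sequence (ε₁,...,εₙ) ∈ {−1,+1}ⁿ, the set 𝓔̄ := {θ ∈ ℝ^d : ‖S₀(θ)‖² < ‖S_ε(θ)‖²} is either empty or a convex set containing the least-squares estimate θ̂ₙ. -/
open Matrix

noncomputable section

lemma spsNormSq_eq_dot {d : ℕ} (v : Fin d → ℝ) : spsNormSq v = v ⬝ᵥ v := by
  simp [spsNormSq, dotProduct, sq]

lemma spsNormSq_nonneg {d : ℕ} (v : Fin d → ℝ) : 0 ≤ spsNormSq v :=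
  Finset.sum_nonneg fun j _ => sq_nonneg _

lemma spsNormSq_eq_zero {d : ℕ} {v : Fin d → ℝ} (h : spsNormSq v = 0) : v = 0 := by
  funext j
  have := (Finset.sum_eq_zero_iff_of_nonneg (fun i _ => sq_nonneg (v i))).1 h j
    (Finset.mem_univ j)
  simpa [sq_eq_zero_iff] using this

lemma vecMulVec_mulVec' {d : ℕ} (u v x : Fin d → ℝ) :
    vecMulVec u v *ᵥ x = (v ⬝ᵥ x) • u := by
  funext i
  simp [Matrix.mulVec, Matrix.vecMulVec_apply, dotProduct, Finset.mul_sum, mul_comm,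
    mul_assoc, mul_left_comm]

lemma sum_mulVec' {d n : ℕ} (A : Fin n → Matrix (Fin d) (Fin d) ℝ) (x : Fin d → ℝ) :
    (∑ t, A t) *ᵥ x = ∑ t, A t *ᵥ x := by
  funext i
  simp [Matrix.mulVec, dotProduct, Matrix.sum_apply, Finset.sum_mul]
  rw [Finset.sum_comm]

lemma dotProduct_sum' {d n : ℕ} (v : Fin d → ℝ) (w : Fin n → Fin d → ℝ) :
    v ⬝ᵥ (∑ t, w t) = ∑ t, v ⬝ᵥ w t := by
  simp [dotProduct, Finset.sum_apply, Finset.mul_sum]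
  rw [Finset.sum_comm]

/-- Pointwise convexity identity for the quadratic function
`u ↦ ‖R u‖² − ‖c + L u‖²`. -/
lemma key_identity {d : ℕ} (R L : Matrix (Fin d) (Fin d) ℝ) (c p q : Fin d → ℝ)
    (a b : ℝ) (hab : a + b = 1) :
    spsNormSq (R *ᵥ (a • p + b • q)) - spsNormSq (c + L *ᵥ (a • p + b • q))
      = a * (spsNormSq (R *ᵥ p) - spsNormSq (c + L *ᵥ p))
        + b * (spsNormSq (R *ᵥ q) - spsNormSq (c + L *ᵥ q))
        - a * b * (spsNormSq (R *ᵥ (p - q)) - spsNormSq (L *ᵥ (p - q))) := by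
  have hb : b = 1 - a := by linarith
  subst hb
  have hpt : ∀ j, (R *ᵥ (a • p + (1 - a) • q)) j ^ 2
      - (c + L *ᵥ (a • p + (1 - a) • q)) j ^ 2
      = a * ((R *ᵥ p) j ^ 2 - (c + L *ᵥ p) j ^ 2)
        + (1 - a) * ((R *ᵥ q) j ^ 2 - (c + L *ᵥ q) j ^ 2)
        - a * (1 - a) * ((R *ᵥ (p - q)) j ^ 2 - (L *ᵥ (p - q)) j ^ 2) := by
    intro j
    simp only [Matrix.mulVec_add, Matrix.mulVec_smul, Matrix.mulVec_sub, Pi.add_apply,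
      Pi.smul_apply, Pi.sub_apply, smul_eq_mul]
    ring
  simp only [spsNormSq, ← Finset.sum_sub_distrib, Finset.mul_sum, ← Finset.sum_add_distrib]
  exact Finset.sum_congr rfl fun j _ => hpt j

/-- `‖Rᵀ v‖² = (1/n) ∑ (φ_t ⬝ v)²` when `R Rᵀ = Rn`. -/
lemma normSq_transpose {d n : ℕ} (φ : Fin n → Fin d → ℝ)
    (Rhalf : Matrix (Fin d) (Fin d) ℝ)
    (hfact : Rhalf * Rhalfᵀ = (n : ℝ)⁻¹ • ∑ t, vecMulVec (φ t) (φ t))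
    (v : Fin d → ℝ) :
    spsNormSq (Rhalfᵀ *ᵥ v) = (n : ℝ)⁻¹ * ∑ t, (φ t ⬝ᵥ v) ^ 2 := by
  rw [spsNormSq_eq_dot]
  have h1 : (Rhalfᵀ *ᵥ v) ⬝ᵥ (Rhalfᵀ *ᵥ v) = v ⬝ᵥ ((Rhalf * Rhalfᵀ) *ᵥ v) := by
    rw [Matrix.mulVec_transpose, ← Matrix.mulVec_vecMul, Matrix.dotProduct_mulVec]
  rw [h1, hfact, Matrix.smul_mulVec, sum_mulVec', dotProduct_smul,
    smul_eq_mul]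
  congr 1
  rw [dotProduct_sum']
  refine Finset.sum_congr rfl fun t _ => ?_
  rw [vecMulVec_mulVec', dotProduct_smul, smul_eq_mul, dotProduct_comm, sq]

/-- The key PSD inequality: `‖Rhalf⁻¹ M u‖ ≤ ‖Rhalfᵀ u‖` where
`M = (1/n) ∑ ε_t φ_t φ_tᵀ`. -/
lemma key_ineq {d n : ℕ} (φ : Fin n → Fin d → ℝ)
    (ε : Fin n → ℝ) (hε : ∀ t, ε t = 1 ∨ ε t = -1)
    (Rhalf : Matrix (Fin d) (Fin d) ℝ) (hRhalfInv : IsUnit Rhalf.det)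
    (hfact : Rhalf * Rhalfᵀ = (n : ℝ)⁻¹ • ∑ t, vecMulVec (φ t) (φ t))
    (u : Fin d → ℝ) :
    spsNormSq ((Rhalf⁻¹ * ((n : ℝ)⁻¹ • ∑ t, ε t • vecMulVec (φ t) (φ t))) *ᵥ u)
      ≤ spsNormSq (Rhalfᵀ *ᵥ u) := by
  set M : Matrix (Fin d) (Fin d) ℝ := (n : ℝ)⁻¹ • ∑ t, ε t • vecMulVec (φ t) (φ t) with hM
  set w : Fin d → ℝ := (Rhalf⁻¹ * M) *ᵥ u with hw
  set z : Fin d → ℝ := (Rhalfᵀ)⁻¹ *ᵥ w with hzdef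
  have hdetT : IsUnit Rhalfᵀ.det := by rwa [Matrix.det_transpose]
  have hz : Rhalfᵀ *ᵥ z = w := by
    rw [hzdef, Matrix.mulVec_mulVec, Matrix.mul_nonsing_inv _ hdetT, Matrix.one_mulVec]
  have hMu : Rhalf *ᵥ w = M *ᵥ u := by
    rw [hw, ← Matrix.mulVec_mulVec, Matrix.mulVec_mulVec, Matrix.mul_nonsing_inv _ hRhalfInv,
      Matrix.one_mulVec]
  have hMdot : ∀ v : Fin d → ℝ, v ⬝ᵥ (M *ᵥ u)
      = (n : ℝ)⁻¹ * ∑ t, ε t * ((φ t ⬝ᵥ u) * (φ t ⬝ᵥ v)) := by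
    intro v
    rw [hM, Matrix.smul_mulVec, sum_mulVec', dotProduct_smul, smul_eq_mul]
    congr 1
    rw [dotProduct_sum']
    refine Finset.sum_congr rfl fun t _ => ?_
    rw [Matrix.smul_mulVec, vecMulVec_mulVec', smul_smul, dotProduct_smul,
      smul_eq_mul, dotProduct_comm v (φ t)]
    ring
  have hww : w ⬝ᵥ w = (n : ℝ)⁻¹ * ∑ t, ε t * ((φ t ⬝ᵥ u) * (φ t ⬝ᵥ z)) := by
    calc w ⬝ᵥ w = (Rhalfᵀ *ᵥ z) ⬝ᵥ w := by rw [hz]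
    _ = z ⬝ᵥ (Rhalf *ᵥ w) := by
        rw [Matrix.mulVec_transpose, ← Matrix.dotProduct_mulVec]
    _ = z ⬝ᵥ (M *ᵥ u) := by rw [hMu]
    _ = _ := hMdot z
  -- abbreviations
  set S : ℝ := ∑ t, ε t * ((φ t ⬝ᵥ u) * (φ t ⬝ᵥ z)) with hS
  set A : ℝ := ∑ t, (φ t ⬝ᵥ u) ^ 2 with hA
  set B : ℝ := ∑ t, (φ t ⬝ᵥ z) ^ 2 with hB
  have hnA : spsNormSq (Rhalfᵀ *ᵥ u) = (n : ℝ)⁻¹ * A := normSq_transpose φ Rhalf hfact u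
  have hnB : spsNormSq (Rhalfᵀ *ᵥ z) = (n : ℝ)⁻¹ * B := normSq_transpose φ Rhalf hfact z
  have hwz : spsNormSq (Rhalfᵀ *ᵥ z) = w ⬝ᵥ w := by rw [hz, spsNormSq_eq_dot]
  have hSB : (n : ℝ)⁻¹ * B = (n : ℝ)⁻¹ * S := by rw [← hnB, hwz, hww]
  have hCS : S ^ 2 ≤ A * B := by
    have h := Finset.sum_mul_sq_le_sq_mul_sq Finset.univ
      (fun t => ε t * (φ t ⬝ᵥ u)) (fun t => φ t ⬝ᵥ z)
    have h1 : ∀ t : Fin n, (ε t * (φ t ⬝ᵥ u)) ^ 2 = (φ t ⬝ᵥ u) ^ 2 := by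
      intro t
      rcases hε t with h' | h' <;> rw [h'] <;> ring
    have h2 : (∑ t, (ε t * (φ t ⬝ᵥ u)) * (φ t ⬝ᵥ z)) = S := by
      rw [hS]; exact Finset.sum_congr rfl fun t _ => by ring
    rw [h2] at h
    calc S ^ 2 ≤ (∑ t, (ε t * (φ t ⬝ᵥ u)) ^ 2) * ∑ t, (φ t ⬝ᵥ z) ^ 2 := h
    _ = A * B := by rw [Finset.sum_congr rfl fun t _ => h1 t]
  have hA0 : 0 ≤ A := Finset.sum_nonneg fun t _ => sq_nonneg _
  have hB0 : 0 ≤ B := Finset.sum_nonneg fun t _ => sq_nonneg _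
  -- goal : spsNormSq w ≤ spsNormSq (Rhalfᵀ u)
  rw [spsNormSq_eq_dot, hww, hnA]
  rcases eq_or_ne (n : ℝ)⁻¹ 0 with hn0 | hn0
  · rw [hn0]; simp
  have hnpos : 0 < (n : ℝ)⁻¹ := by
    have : (0 : ℝ) ≤ (n : ℝ)⁻¹ := by positivity
    exact lt_of_le_of_ne this (Ne.symm hn0)
  have hBS : B = S := mul_left_cancel₀ (ne_of_gt hnpos) hSB
  have hSA : S ≤ A := by
    rcases eq_or_lt_of_le (hBS ▸ hB0 : (0 : ℝ) ≤ S) with h0 | h0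
    · linarith
    · have : S * S ≤ A * S := by
        have : S ^ 2 ≤ A * S := by rw [← hBS] at hCS ⊢; exact hCS
        nlinarith
      exact le_of_mul_le_mul_right this h0
  nlinarith

/-- For each fixed realization of the signs `ε ∈ {−1,+1}ⁿ`, the set
`𝓔̄ = {θ : ‖S₀(θ)‖² < ‖S_ε(θ)‖²}` is either empty or a convex set containing the
least-squares estimate. -/
theorem Ebar_empty_or_convex_contains_lse
    (d n : ℕ) (hn : 0 < n)
    (φ : Fin n → Fin d → ℝ) (Y : Fin n → ℝ)
    (ε : Fin n → ℝ) (hε : ∀ t, ε t = 1 ∨ ε t = -1)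
    (Rn : Matrix (Fin d) (Fin d) ℝ)
    (hRn : Rn = (n : ℝ)⁻¹ • ∑ t, vecMulVec (φ t) (φ t))
    (hPD : Rn.PosDef)
    (Rhalf : Matrix (Fin d) (Fin d) ℝ)
    (hRhalfInv : IsUnit Rhalf.det)
    (hfact : Rhalf * Rhalfᵀ = Rn)
    (θhat : Fin d → ℝ)
    (hθhat : θhat = (∑ t, vecMulVec (φ t) (φ t))⁻¹ *ᵥ ∑ t, Y t • φ t) :
    {θ : Fin d → ℝ |
        spsNormSq (spsVec φ Rhalf Y (fun _ => 1) θ) < spsNormSq (spsVec φ Rhalf Y ε θ)}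
      = ∅ ∨
    (Convex ℝ {θ : Fin d → ℝ |
        spsNormSq (spsVec φ Rhalf Y (fun _ => 1) θ) < spsNormSq (spsVec φ Rhalf Y ε θ)} ∧
      θhat ∈ {θ : Fin d → ℝ |
        spsNormSq (spsVec φ Rhalf Y (fun _ => 1) θ) < spsNormSq (spsVec φ Rhalf Y ε θ)}) := by
  have hfact' : Rhalf * Rhalfᵀ = (n : ℝ)⁻¹ • ∑ t, vecMulVec (φ t) (φ t) := by
    rw [hfact, hRn]
  set G : Matrix (Fin d) (Fin d) ℝ := ∑ t, vecMulVec (φ t) (φ t) with hGdef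
  -- G is invertible
  have hGunit : IsUnit G.det := by
    have hdetRn : Rn.det ≠ 0 := ne_of_gt hPD.det_pos
    rw [hRn, hGdef, Matrix.det_smul] at hdetRn
    have : G.det ≠ 0 := fun h => hdetRn (by rw [h, mul_zero])
    exact isUnit_iff_ne_zero.2 this
  -- normal equations
  have hNE : ∑ t, (Y t - φ t ⬝ᵥ θhat) • φ t = 0 := by
    have hGθ : G *ᵥ θhat = ∑ t, Y t • φ t := by
      rw [hθhat, Matrix.mulVec_mulVec, Matrix.mul_nonsing_inv _ hGunit, Matrix.one_mulVec]
    have hsplit : ∑ t, (Y t - φ t ⬝ᵥ θhat) • φ t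
        = (∑ t, Y t • φ t) - G *ᵥ θhat := by
      rw [hGdef, sum_mulVec', ← Finset.sum_sub_distrib]
      refine Finset.sum_congr rfl fun t _ => ?_
      rw [vecMulVec_mulVec', sub_smul]
    rw [hsplit, hGθ, sub_self]
  -- affine decompositions
  set M : Matrix (Fin d) (Fin d) ℝ := (n : ℝ)⁻¹ • ∑ t, ε t • vecMulVec (φ t) (φ t) with hMdef
  set L : Matrix (Fin d) (Fin d) ℝ := Rhalf⁻¹ * M with hLdef
  set c : Fin d → ℝ := spsVec φ Rhalf Y ε θhat with hcdef
  have hsum_split : ∀ (a : Fin n → ℝ) (θ : Fin d → ℝ),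
      ∑ t, (a t * (Y t - φ t ⬝ᵥ θ)) • φ t
        = (∑ t, (a t * (Y t - φ t ⬝ᵥ θhat)) • φ t)
          + (∑ t, a t • vecMulVec (φ t) (φ t)) *ᵥ (θhat - θ) := by
    intro a θ
    rw [sum_mulVec', ← Finset.sum_add_distrib]
    refine Finset.sum_congr rfl fun t _ => ?_
    rw [Matrix.smul_mulVec, vecMulVec_mulVec', smul_smul, ← add_smul,
      dotProduct_sub]
    ring_nf
  have hA1 : ∀ θ, spsVec φ Rhalf Y (fun _ => 1) θ = Rhalfᵀ *ᵥ (θhat - θ) := by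
    intro θ
    unfold spsVec
    rw [hsum_split (fun _ => 1) θ]
    simp only [one_mul, one_smul]
    rw [hNE, zero_add, ← Matrix.smul_mulVec, Matrix.mulVec_mulVec]
    have : Rhalf⁻¹ * ((n : ℝ)⁻¹ • ∑ t, vecMulVec (φ t) (φ t)) = Rhalfᵀ := by
      rw [← hfact', ← Matrix.mul_assoc, Matrix.nonsing_inv_mul _ hRhalfInv, Matrix.one_mul]
    rw [this]
  have hAe : ∀ θ, spsVec φ Rhalf Y ε θ = c + L *ᵥ (θhat - θ) := by
    intro θ
    unfold spsVec
    have hL' : L *ᵥ (θhat - θ)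
        = Rhalf⁻¹ *ᵥ ((n : ℝ)⁻¹ • ((∑ t, ε t • vecMulVec (φ t) (φ t)) *ᵥ (θhat - θ))) := by
      rw [hLdef, ← Matrix.mulVec_mulVec, hMdef, Matrix.smul_mulVec]
    have hc' : c = Rhalf⁻¹ *ᵥ ((n : ℝ)⁻¹ • ∑ t, (ε t * (Y t - φ t ⬝ᵥ θhat)) • φ t) := rfl
    rw [hc', hL', ← Matrix.mulVec_add, ← smul_add, hsum_split ε θ]
  have hKI : ∀ u, spsNormSq (L *ᵥ u) ≤ spsNormSq (Rhalfᵀ *ᵥ u) := by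
    intro u
    rw [hLdef, hMdef]
    exact key_ineq φ ε hε Rhalf hRhalfInv hfact' u
  by_cases hc : spsNormSq c = 0
  · -- empty case
    left
    rw [Set.eq_empty_iff_forall_notMem]
    intro θ hθ
    have hc0 : c = 0 := spsNormSq_eq_zero hc
    simp only [Set.mem_setOf_eq] at hθ
    rw [hA1 θ, hAe θ, hc0, zero_add] at hθ
    exact absurd hθ (not_lt.2 (hKI (θhat - θ)))
  · -- convex case
    right
    constructor
    · intro x hx y hy a b ha hb hab
      simp only [Set.mem_setOf_eq] at hx hy ⊢
      rw [hA1, hAe] at hx hy ⊢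
      set p : Fin d → ℝ := θhat - x with hp
      set q : Fin d → ℝ := θhat - y with hq
      have hsplit : θhat - (a • x + b • y) = a • p + b • q := by
        rw [hp, hq, smul_sub, smul_sub]
        rw [show a • θhat - a • x + (b • θhat - b • y)
            = (a + b) • θhat - (a • x + b • y) by rw [add_smul]; abel]
        rw [hab, one_smul]
      rw [hsplit]
      have hid := key_identity Rhalfᵀ L c p q a b hab
      have hN : 0 ≤ spsNormSq (Rhalfᵀ *ᵥ (p - q)) - spsNormSq (L *ᵥ (p - q)) :=
        sub_nonneg.2 (hKI (p - q))
      have hx' : spsNormSq (Rhalfᵀ *ᵥ p) - spsNormSq (c + L *ᵥ p) < 0 := by linarith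
      have hy' : spsNormSq (Rhalfᵀ *ᵥ q) - spsNormSq (c + L *ᵥ q) < 0 := by linarith
      set Fp := spsNormSq (Rhalfᵀ *ᵥ p) - spsNormSq (c + L *ᵥ p) with hFp
      set Fq := spsNormSq (Rhalfᵀ *ᵥ q) - spsNormSq (c + L *ᵥ q) with hFq
      set Nq := spsNormSq (Rhalfᵀ *ᵥ (p - q)) - spsNormSq (L *ᵥ (p - q)) with hNq
      have hgoal : spsNormSq (Rhalfᵀ *ᵥ (a • p + b • q))
          - spsNormSq (c + L *ᵥ (a • p + b • q)) < 0 := by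
        rw [hid]
        have h3 : 0 ≤ a * b * Nq := mul_nonneg (mul_nonneg ha hb) hN
        have h1 : a * Fp ≤ 0 := mul_nonpos_of_nonneg_of_nonpos ha hx'.le
        have h2 : b * Fq ≤ 0 := mul_nonpos_of_nonneg_of_nonpos hb hy'.le
        rcases lt_or_ge 0 a with hapos | ha0
        · have h4 : a * Fp < 0 := mul_neg_of_pos_of_neg hapos hx'
          linarith
        · have haz : a = 0 := le_antisymm ha0 ha
          have hbz : b = 1 := by linarith
          have h4 : b * Fq = Fq := by rw [hbz, one_mul]
          linarith
      linarith
    · simp only [Set.mem_setOf_eq]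
      rw [hA1, hAe, sub_self]
      simp only [Matrix.mulVec_zero, add_zero]
      have h0 : spsNormSq ((0 : Fin d → ℝ)) = 0 := by simp [spsNormSq]
      rw [h0]
      exact lt_of_le_of_ne (spsNormSq_nonneg c) (Ne.symm hc)

end
end

section
/- For every realization of the random signs, the SPS confidence region satisfies the inclusion Θ̂ₙ ⊆ {θ ∈ ℝ^d : (θ − θ̂ₙ)ᵀ Rₙ (θ − θ̂ₙ) ≤ r(θ)}, where r(θ) denotes the q-th largest value among ‖S₁(θ)‖², ..., ‖S_{m−1}(θ)‖². -/
/-!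
The normal equations give `S₀(θ) = (Rₙ^{1/2})ᵀ (θ̂ₙ - θ)`, hence
`‖S₀(θ)‖² = (θ - θ̂ₙ)ᵀ Rₙ (θ - θ̂ₙ)`. If `𝓡(θ) ≤ m - q`, then `‖S₀(θ)‖²` beats at most
`m - q - 1` of the `m - 1` values `‖Sᵢ(θ)‖²`, so at least `q` of them are `≥ ‖S₀(θ)‖²`, and then
so is the `q`-th largest.
-/

open Matrix

noncomputable section

/-- The `q`-th largest element of a multiset of reals (counted with multiplicity). -/
def qthLargest (s : Multiset ℝ) (q : ℕ) : ℝ :=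
  (s.sort (· ≤ ·)).getD (Multiset.card s - q) 0

theorem List.Pairwise.le_getD_length_sub_of_le_countP {α : Type*} [LinearOrder α]
    {l : List α} (hl : l.Pairwise (· ≤ ·)) {x : α} {q : ℕ} (hq : 0 < q)
    (hcount : q ≤ l.countP (x ≤ ·)) (d : α) :
    x ≤ l.getD (l.length - q) d := by
  have hlen : q ≤ l.length := hcount.trans List.countP_le_length
  set k := l.length - q
  have hk : k < l.length := by omega
  rw [List.getD_eq_getElem _ _ hk]
  by_contra! hlt
  have hsplit := List.take_append_drop k l
  have hdrop : l.drop k = l[k] :: l.drop (k + 1) := List.drop_eq_getElem_cons hk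
  have htake : (l.take k).countP (x ≤ ·) = 0 := by
    have hle := (List.pairwise_append.mp (hsplit ▸ hl)).2.2
    refine List.countP_eq_zero.mpr fun y hy hxy => ?_
    have hyk : y ≤ l[k] := hle y hy l[k] (hdrop ▸ List.mem_cons_self)
    exact absurd (decide_eq_true_iff.mp hxy) (by order)
  have hdrop_lt : (l.drop k).countP (x ≤ ·) < (l.drop k).length := by
    refine lt_of_le_of_ne List.countP_le_length fun heq => ?_
    have hxk := List.countP_eq_length.mp heq l[k] (hdrop ▸ List.mem_cons_self)
    exact absurd (decide_eq_true_iff.mp hxk) (not_le.mpr hlt)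
  have hlt_q : l.countP (x ≤ ·) < q :=
    calc l.countP (x ≤ ·) = (l.take k).countP (x ≤ ·) + (l.drop k).countP (x ≤ ·) := by
          rw [← List.countP_append, hsplit]
      _ < (l.drop k).length := by rw [htake, zero_add]; exact hdrop_lt
      _ = q := by rw [List.length_drop]; omega
  omega

theorem le_qthLargest_of_le_countP {s : Multiset ℝ} {x : ℝ} {q : ℕ} (hq : 0 < q)
    (hcount : q ≤ s.countP (x ≤ ·)) : x ≤ qthLargest s q := by
  rw [← Multiset.sort_eq s (· ≤ ·), Multiset.coe_countP] at hcount
  rw [qthLargest, ← Multiset.length_sort (· ≤ ·)]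
  exact (s.pairwise_sort _).le_getD_length_sub_of_le_countP hq hcount 0

theorem le_of_not_succPi {m : ℕ} {σ : Equiv.Perm (Fin m)} {z : Fin m → ℝ} {k j : Fin m}
    (h : ¬ SuccPi σ z k j) : z k ≤ z j :=
  not_lt.mp fun hlt => h (Or.inl hlt)

theorem le_countP_of_rank_le {m q : ℕ} [NeZero m] (σ : Equiv.Perm (Fin m)) (z : Fin m → ℝ)
    (hrank : 1 + {i : Fin m | i ≠ 0 ∧ SuccPi σ z 0 i}.ncard ≤ m - q) :
    q ≤ ((Finset.univ.filter (· ≠ (0 : Fin m))).val.map z).countP (z 0 ≤ ·) := by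
  classical
  set others := Finset.univ.filter (· ≠ (0 : Fin m))
  have hothers : others.card = m - 1 := by
    simp [others, Finset.filter_ne']
  have hbeaten : {i : Fin m | i ≠ 0 ∧ SuccPi σ z 0 i}.ncard
      = (others.filter (SuccPi σ z 0)).card := by
    rw [← Set.ncard_coe_finset]
    congr 1
    ext i
    simp [others]
  have hsplit := Finset.card_filter_add_card_filter_not (s := others) (SuccPi σ z 0)
  have hnot_beaten : (others.filter fun i => ¬ SuccPi σ z 0 i).card
      ≤ (others.filter fun i => z 0 ≤ z i).card :=
    Finset.card_le_card (Finset.monotone_filter_right _ fun _ _ => le_of_not_succPi)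
  rw [Multiset.countP_map]
  change q ≤ (others.filter fun i => z 0 ≤ z i).card
  omega

section Algebra

variable {d n : ℕ} (φ : Fin n → Fin d → ℝ)

theorem sum_vecMulVec_mulVec (θ : Fin d → ℝ) :
    (∑ t, vecMulVec (φ t) (φ t)) *ᵥ θ = ∑ t, (φ t ⬝ᵥ θ) • φ t := by
  simp [Matrix.sum_mulVec, vecMulVec_mulVec]

theorem sum_residual_smul_eq_mulVec_sub (Y : Fin n → ℝ)
    (hG : IsUnit (∑ t, vecMulVec (φ t) (φ t)).det) (θ : Fin d → ℝ) :
    ∑ t, (Y t - φ t ⬝ᵥ θ) • φ t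
      = (∑ t, vecMulVec (φ t) (φ t)) *ᵥ
          ((∑ t, vecMulVec (φ t) (φ t))⁻¹ *ᵥ ∑ t, Y t • φ t - θ) := by
  rw [mulVec_sub, mulVec_mulVec, mul_nonsing_inv _ hG, one_mulVec, sum_vecMulVec_mulVec]
  simp only [sub_smul, Finset.sum_sub_distrib]

theorem spsNormSq_eq_dotProduct (v : Fin d → ℝ) : spsNormSq v = v ⬝ᵥ v := by
  simp [spsNormSq, dotProduct, sq]

theorem spsNormSq_transpose_mulVec (R : Matrix (Fin d) (Fin d) ℝ) (v : Fin d → ℝ) :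
    spsNormSq (Rᵀ *ᵥ v) = v ⬝ᵥ ((R * Rᵀ) *ᵥ v) := by
  rw [spsNormSq_eq_dotProduct, ← mulVec_mulVec, dotProduct_mulVec v R, mulVec_transpose]

theorem spsS_zero_eq {m : ℕ} [NeZero m] (Y : Fin n → ℝ) (a : Fin m → Fin n → ℝ)
    (ha0 : ∀ t, a 0 t = 1) (hG : IsUnit (∑ t, vecMulVec (φ t) (φ t)).det)
    (Rhalf : Matrix (Fin d) (Fin d) ℝ) (hRhalf : IsUnit Rhalf.det)
    (hfact : Rhalf * Rhalfᵀ = (n : ℝ)⁻¹ • ∑ t, vecMulVec (φ t) (φ t)) (θ : Fin d → ℝ) :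
    spsS φ Rhalf Y a 0 θ
      = Rhalfᵀ *ᵥ ((∑ t, vecMulVec (φ t) (φ t))⁻¹ *ᵥ ∑ t, Y t • φ t - θ) := by
  simp only [spsS, ha0, one_mul]
  rw [sum_residual_smul_eq_mulVec_sub φ Y hG, ← smul_mulVec, ← hfact, mulVec_mulVec,
    ← mul_assoc, nonsing_inv_mul _ hRhalf, one_mul]

end Algebra

theorem sps_region_subset_qth_largest_general
    (d n m q : ℕ) [NeZero m] (hn : 0 < n) (hq : 0 < q)
    (φ : Fin n → Fin d → ℝ) (Y : Fin n → ℝ)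
    (Rn : Matrix (Fin d) (Fin d) ℝ)
    (hRn : Rn = (n : ℝ)⁻¹ • ∑ t, vecMulVec (φ t) (φ t))
    (hPD : Rn.PosDef)
    (Rhalf : Matrix (Fin d) (Fin d) ℝ)
    (hRhalfInv : IsUnit Rhalf.det)
    (hfact : Rhalf * Rhalfᵀ = Rn)
    (θhat : Fin d → ℝ)
    (hθhat : θhat = (∑ t, vecMulVec (φ t) (φ t))⁻¹ *ᵥ ∑ t, Y t • φ t)
    (a : Fin m → Fin n → ℝ)
    (ha0 : ∀ t, a 0 t = 1)
    (π : Equiv.Perm (Fin m)) :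
    spsRegion φ Rhalf Y a π q ⊆
      {θ : Fin d → ℝ | (θ - θhat) ⬝ᵥ (Rn *ᵥ (θ - θhat)) ≤
        qthLargest ((Finset.univ.filter (fun i : Fin m => i ≠ 0)).val.map
          (fun i => spsNormSq (spsS φ Rhalf Y a i θ))) q} := by
  intro θ hθ
  have hn' : (n : ℝ) ≠ 0 := Nat.cast_ne_zero.mpr hn.ne'
  have hG : IsUnit (∑ t, vecMulVec (φ t) (φ t)).det := by
    have hGn : ∑ t, vecMulVec (φ t) (φ t) = (n : ℝ) • Rn := by
      rw [hRn, smul_smul, mul_inv_cancel₀ hn', one_smul]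
    rw [hGn, det_smul]
    exact (mul_ne_zero (pow_ne_zero _ hn') hPD.det_pos.ne').isUnit
  have hS0 : spsNormSq (spsS φ Rhalf Y a 0 θ) = (θ - θhat) ⬝ᵥ (Rn *ᵥ (θ - θhat)) := by
    rw [spsS_zero_eq φ Y a ha0 hG Rhalf hRhalfInv (hfact.trans hRn), ← hθhat,
      spsNormSq_transpose_mulVec, hfact, ← neg_sub θ θhat]
    simp only [mulVec_neg, neg_dotProduct, dotProduct_neg, neg_neg]
  rw [Set.mem_ofPred_eq, ← hS0]
  exact le_qthLargest_of_le_countP hq (le_countP_of_rank_le π _ hθ)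

/-- The SPS region is contained in `{θ : (θ−θ̂ₙ)ᵀ Rₙ (θ−θ̂ₙ) ≤ r(θ)}`, where `r(θ)` is
the `q`-th largest of the values `‖S₁(θ)‖², …, ‖S_{m−1}(θ)‖²`. -/
theorem sps_region_subset_qth_largest
    (d n m q : ℕ) [NeZero m] (hn : 0 < n) (hq : 0 < q) (hqm : q < m)
    (φ : Fin n → Fin d → ℝ) (Y : Fin n → ℝ)
    (Rn : Matrix (Fin d) (Fin d) ℝ)
    (hRn : Rn = (n : ℝ)⁻¹ • ∑ t, vecMulVec (φ t) (φ t))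
    (hPD : Rn.PosDef)
    (Rhalf : Matrix (Fin d) (Fin d) ℝ)
    (hRhalfInv : IsUnit Rhalf.det)
    (hfact : Rhalf * Rhalfᵀ = Rn)
    (θhat : Fin d → ℝ)
    (hθhat : θhat = (∑ t, vecMulVec (φ t) (φ t))⁻¹ *ᵥ ∑ t, Y t • φ t)
    (a : Fin m → Fin n → ℝ)
    (ha0 : ∀ t, a 0 t = 1)
    (ha : ∀ i t, a i t = 1 ∨ a i t = -1)
    (π : Equiv.Perm (Fin m)) :
    spsRegion φ Rhalf Y a π q ⊆
      {θ : Fin d → ℝ | (θ - θhat) ⬝ᵥ (Rn *ᵥ (θ - θhat)) ≤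
        qthLargest ((Finset.univ.filter (fun i : Fin m => i ≠ 0)).val.map
          (fun i => spsNormSq (spsS φ Rhalf Y a i θ))) q} :=
  sps_region_subset_qth_largest_general d n m q hn hq φ Y Rn hRn hPD Rhalf hRhalfInv hfact θhat
    hθhat a ha0 π

end
end
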